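/- Let P_n (n > 2) be the weighted graph on vertices v_1,…,v_n with w(v_i,v_{i+1}) = 1 for 1 ≤ i < n and all other pairwise weights 0. Then OPT(P_n) = O(n log n) under Dasgupta's cost: the cluster tree obtained by recursively bisecting the path into two subpaths of (nearly) equal length has cost at most C·n·log n for an absolute constant C. -/

import Mathlib

open scoped BigOperators

attribute [local instance] Classical.propDecidable

noncomputable section

/-! ### Cluster trees -/

/-- A (binary, rooted) hierarchical-clustering tree whose leaves are labelled by
vertices of `V`. -/
inductive ClusterTree (V : Type) : Type where
  | leaf : V → ClusterTree V
  | node : ClusterTree V → ClusterTree V → ClusterTree V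

namespace ClusterTree

variable {V : Type}

/-- The list of leaf labels of the tree (left-to-right). -/
def leavesList : ClusterTree V → List V
  | leaf v => [v]
  | node L R => leavesList L ++ leavesList R

/-- The set of leaf labels of the tree. -/
def leaves [DecidableEq V] (T : ClusterTree V) : Finset V :=
  T.leavesList.toFinset

end ClusterTree

section Defs

variable {V : Type}

/-- `T` is a cluster tree for the whole (finite) vertex set `V`: its leaves are
pairwise distinct and exhaust the vertices. -/
def IsClusterTree [DecidableEq V] [Fintype V] (T : ClusterTree V) : Prop :=
  T.leavesList.Nodup ∧ T.leaves = Finset.univ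

/-- `IsSubtreeOf s T` : `s` occurs as a rooted subtree of `T`. -/
def IsSubtreeOf : ClusterTree V → ClusterTree V → Prop
  | s, ClusterTree.leaf v => s = ClusterTree.leaf v
  | s, ClusterTree.node L R => s = ClusterTree.node L R ∨ IsSubtreeOf s L ∨ IsSubtreeOf s R

/-- The subtree of `T` rooted at the lowest common ancestor of the leaves `x` and `y`. -/
def lcaSubtree [DecidableEq V] : ClusterTree V → V → V → ClusterTree V
  | ClusterTree.leaf v, _, _ => ClusterTree.leaf v
  | ClusterTree.node L R, x, y =>
    if x ∈ L.leaves ∧ y ∈ L.leaves then lcaSubtree L x y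
    else if x ∈ R.leaves ∧ y ∈ R.leaves then lcaSubtree R x y
    else ClusterTree.node L R

/-- `w(A, B) = ∑_{a ∈ A, b ∈ B} w a b`. -/
def cutWeight (w : V → V → ℝ) (A B : Finset V) : ℝ := ∑ a ∈ A, ∑ b ∈ B, w a b

/-- `w(A) = ∑_{a, b ∈ A} w a b` (ordered pairs; each edge counted twice). -/
def innerWeight (w : V → V → ℝ) (A : Finset V) : ℝ := ∑ a ∈ A, ∑ b ∈ A, w a b

/-- `∑_{e ∈ E} w(e)`, for a symmetric weight function with zero diagonal. -/
def totalWeight [Fintype V] (w : V → V → ℝ) : ℝ := (∑ u : V, ∑ v : V, w u v) / 2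

/-- Cost of a cluster tree: each internal node `N` with children `N₁, N₂`
contributes `w(V(N₁), V(N₂)) · g(|V(N₁)|, |V(N₂)|)`. -/
def treeCost [DecidableEq V] (w : V → V → ℝ) (g : ℕ → ℕ → ℝ) : ClusterTree V → ℝ
  | ClusterTree.leaf _ => 0
  | ClusterTree.node L R =>
      cutWeight w L.leaves R.leaves * g L.leaves.card R.leaves.card
        + treeCost w g L + treeCost w g R

/-- Dasgupta's cost (= `treeCost` with `g (a, b) = a + b`). -/
def dasguptaCost [DecidableEq V] (w : V → V → ℝ) : ClusterTree V → ℝ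
  | ClusterTree.leaf _ => 0
  | ClusterTree.node L R =>
      ((L.leaves.card + R.leaves.card : ℕ) : ℝ) * cutWeight w L.leaves R.leaves
        + dasguptaCost w L + dasguptaCost w R

/-! ### Generating trees -/

/-- `T` is a generating tree for the similarity graph `w` : there is a nonnegative
weight function on the internal nodes, non-increasing from leaves towards the root,
realizing every edge weight at the corresponding LCA. -/
def IsGenerating [DecidableEq V] (w : V → V → ℝ) (T : ClusterTree V) : Prop :=
  ∃ W : ClusterTree V → ℝ,
    (∀ s, IsSubtreeOf s T → 0 ≤ W s) ∧
    (∀ L R, IsSubtreeOf (ClusterTree.node L R) T →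
      ∀ s, IsSubtreeOf s L ∨ IsSubtreeOf s R → W (ClusterTree.node L R) ≤ W s) ∧
    (∀ x y, x ∈ T.leaves → y ∈ T.leaves → x ≠ y → w x y = W (lcaSubtree T x y))

/-- Generating tree in the dissimilarity setting (weights non-decreasing from
leaves towards the root). -/
def IsGeneratingDissim [DecidableEq V] (w : V → V → ℝ) (T : ClusterTree V) : Prop :=
  ∃ W : ClusterTree V → ℝ,
    (∀ s, IsSubtreeOf s T → 0 ≤ W s) ∧
    (∀ L R, IsSubtreeOf (ClusterTree.node L R) T →
      ∀ s, IsSubtreeOf s L ∨ IsSubtreeOf s R → W s ≤ W (ClusterTree.node L R)) ∧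
    (∀ x y, x ∈ T.leaves → y ∈ T.leaves → x ≠ y → w x y = W (lcaSubtree T x y))

/-- Strictly generating tree (similarity setting). -/
def IsStrictlyGenerating [DecidableEq V] (w : V → V → ℝ) (T : ClusterTree V) : Prop :=
  ∃ W : ClusterTree V → ℝ,
    (∀ s, IsSubtreeOf s T → 0 ≤ W s) ∧
    (∀ L R, IsSubtreeOf (ClusterTree.node L R) T →
      ∀ s, IsSubtreeOf s L ∨ IsSubtreeOf s R → W (ClusterTree.node L R) < W s) ∧
    (∀ x y, x ∈ T.leaves → y ∈ T.leaves → x ≠ y → w x y = W (lcaSubtree T x y))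

/-- Strictly generating tree (dissimilarity setting). -/
def IsStrictlyGeneratingDissim [DecidableEq V] (w : V → V → ℝ) (T : ClusterTree V) : Prop :=
  ∃ W : ClusterTree V → ℝ,
    (∀ s, IsSubtreeOf s T → 0 ≤ W s) ∧
    (∀ L R, IsSubtreeOf (ClusterTree.node L R) T →
      ∀ s, IsSubtreeOf s L ∨ IsSubtreeOf s R → W s < W (ClusterTree.node L R)) ∧
    (∀ x y, x ∈ T.leaves → y ∈ T.leaves → x ≠ y → w x y = W (lcaSubtree T x y))

/-! ### Ultrametrics and ground-truth inputs -/

/-- `d` is an ultrametric on `V`. -/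
def IsUltrametric (d : V → V → ℝ) : Prop :=
  (∀ x, d x x = 0) ∧ (∀ x y, d x y = 0 → x = y) ∧ (∀ x y, d x y = d y x) ∧
  (∀ x y, 0 ≤ d x y) ∧ (∀ x y z, d x y ≤ max (d x z) (d y z))

/-- `w` is a similarity graph generated from an ultrametric via a
non-increasing nonnegative function `f`. -/
def GeneratedFromUltrametric (w : V → V → ℝ) : Prop :=
  ∃ (d : V → V → ℝ) (f : ℝ → ℝ),
    IsUltrametric d ∧
    (∀ a b : ℝ, 0 ≤ a → a ≤ b → f b ≤ f a) ∧
    (∀ a : ℝ, 0 ≤ a → 0 ≤ f a) ∧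
    (∀ x y : V, x ≠ y → w x y = f (d x y))

/-- `w` is a dissimilarity graph generated from an ultrametric via a
non-decreasing nonnegative function `f`. -/
def GeneratedFromUltrametricDissim (w : V → V → ℝ) : Prop :=
  ∃ (d : V → V → ℝ) (f : ℝ → ℝ),
    IsUltrametric d ∧
    (∀ a b : ℝ, 0 ≤ a → a ≤ b → f a ≤ f b) ∧
    (∀ a : ℝ, 0 ≤ a → 0 ≤ f a) ∧
    (∀ x y : V, x ≠ y → w x y = f (d x y))

/-- `w` is a similarity graph generated from a *minimal* ultrametric:
pairs with equal weights are at equal ultrametric distance. -/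
def GeneratedFromMinimalUltrametric (w : V → V → ℝ) : Prop :=
  ∃ (d : V → V → ℝ) (f : ℝ → ℝ),
    IsUltrametric d ∧
    (∀ a b : ℝ, 0 ≤ a → a ≤ b → f b ≤ f a) ∧
    (∀ a : ℝ, 0 ≤ a → 0 ≤ f a) ∧
    (∀ x y : V, x ≠ y → w x y = f (d x y)) ∧
    (∀ u v u' v' : V, u ≠ v → u' ≠ v' → f (d u v) = f (d u' v') → d u v = d u' v')

/-- Dissimilarity analogue of `GeneratedFromMinimalUltrametric`. -/
def GeneratedFromMinimalUltrametricDissim (w : V → V → ℝ) : Prop :=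
  ∃ (d : V → V → ℝ) (f : ℝ → ℝ),
    IsUltrametric d ∧
    (∀ a b : ℝ, 0 ≤ a → a ≤ b → f a ≤ f b) ∧
    (∀ a : ℝ, 0 ≤ a → 0 ≤ f a) ∧
    (∀ x y : V, x ≠ y → w x y = f (d x y)) ∧
    (∀ u v u' v' : V, u ≠ v → u' ≠ v' → f (d u v) = f (d u' v') → d u v = d u' v')

/-- `w` is a `δ`-adversarially-perturbed (similarity) ground-truth input. -/
def IsDeltaPerturbedGroundTruth (w : V → V → ℝ) (δ : ℝ) : Prop :=
  ∃ (d : V → V → ℝ) (f : ℝ → ℝ),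
    IsUltrametric d ∧
    (∀ a b : ℝ, 0 ≤ a → a ≤ b → f b ≤ f a) ∧
    (∀ a : ℝ, 0 ≤ a → 0 ≤ f a) ∧
    (∀ x y : V, x ≠ y → f (d x y) ≤ w x y ∧ w x y ≤ δ * f (d x y))

end Defs

/-- The unit-weight clique on `V`. -/
def cliqueW (V : Type) [DecidableEq V] : V → V → ℝ := fun x y => if x = y then 0 else 1

/-- Admissibility of a cost function (similarity setting): on every similarity graph
generated from a minimal ultrametric, a cluster tree minimizes the cost
iff it is a generating tree. -/
def Admissible (g : ℕ → ℕ → ℝ) : Prop :=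
  ∀ (V : Type) [Fintype V] [DecidableEq V] (w : V → V → ℝ),
    GeneratedFromMinimalUltrametric w →
    ∀ T : ClusterTree V, IsClusterTree T →
      ((∀ T' : ClusterTree V, IsClusterTree T' → treeCost w g T ≤ treeCost w g T')
        ↔ IsGenerating w T)

/-- Admissibility of a value function (dissimilarity setting): on every dissimilarity
graph generated from a minimal ultrametric, a cluster tree maximizes the value
iff it is a generating tree. -/
def AdmissibleDissim (g : ℕ → ℕ → ℝ) : Prop :=
  ∀ (V : Type) [Fintype V] [DecidableEq V] (w : V → V → ℝ),
    GeneratedFromMinimalUltrametricDissim w →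
    ∀ T : ClusterTree V, IsClusterTree T →
      ((∀ T' : ClusterTree V, IsClusterTree T' → treeCost w g T' ≤ treeCost w g T)
        ↔ IsGeneratingDissim w T)

/-! ### Agglomerative (linkage) algorithms, modelled as a nondeterministic relation -/

/-- The initial state of an agglomerative algorithm: all singleton trees. -/
def initState (V : Type) [Fintype V] : Multiset (ClusterTree V) :=
  Finset.univ.val.map ClusterTree.leaf

/-- One merge step of a generic linkage algorithm: merge two candidate trees whose
leaf-set distance `D` is best (w.r.t. `better a b` = "`a` is at least as good as `b`")
among all candidate pairs; any tie-breaking choice is allowed. -/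
inductive MergeStep {V : Type} [DecidableEq V] (D : Finset V → Finset V → ℝ)
    (better : ℝ → ℝ → Prop) :
    Multiset (ClusterTree V) → Multiset (ClusterTree V) → Prop where
  | step : ∀ (rest : Multiset (ClusterTree V)) (T1 T2 : ClusterTree V),
      (∀ (T1' T2' : ClusterTree V) (rest' : Multiset (ClusterTree V)),
          T1 ::ₘ T2 ::ₘ rest = T1' ::ₘ T2' ::ₘ rest' →
          better (D T1.leaves T2.leaves) (D T1'.leaves T2'.leaves)) →
      MergeStep D better (T1 ::ₘ T2 ::ₘ rest) (ClusterTree.node T1 T2 ::ₘ rest)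

/-- `T` is a possible output of the linkage algorithm with dissimilarity/similarity
measure `D` and preference `better`. -/
def IsLinkageOutput {V : Type} [Fintype V] [DecidableEq V]
    (D : Finset V → Finset V → ℝ) (better : ℝ → ℝ → Prop) (T : ClusterTree V) : Prop :=
  Relation.ReflTransGen (MergeStep D better) (initState V) {T}

/-- Average-linkage measure. -/
def avgDist {V : Type} (w : V → V → ℝ) (A B : Finset V) : ℝ :=
  cutWeight w A B / ((A.card : ℝ) * (B.card : ℝ))

/-- Single-linkage measure: `min_{x ∈ A, y ∈ B} w x y`. -/
def minLinkDist {V : Type} [DecidableEq V] (w : V → V → ℝ) (A B : Finset V) : ℝ :=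
  WithTop.untopD 0 (((A ×ˢ B).image fun p => w p.1 p.2).min)

/-- Complete-linkage measure: `max_{x ∈ A, y ∈ B} w x y`. -/
def maxLinkDist {V : Type} [DecidableEq V] (w : V → V → ℝ) (A B : Finset V) : ℝ :=
  WithBot.unbotD 0 (((A ×ˢ B).image fun p => w p.1 p.2).max)

/-! ### Cuts -/

section Cuts

variable {V : Type}

/-- `A ⊕ x` : add `x` to `A` if absent, remove it if present. -/
def symmDiffV [DecidableEq V] (A : Finset V) (x : V) : Finset V :=
  if x ∈ A then A.erase x else insert x A

/-- `(A, B)` is an `ε/|A ∪ B|`-locally-densest cut of the induced subgraph on `A ∪ B`. -/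
def IsLocallyDensestCut [DecidableEq V] (w : V → V → ℝ) (ε : ℝ) (A B : Finset V) : Prop :=
  ∀ x ∈ A ∪ B,
    cutWeight w (symmDiffV A x) (symmDiffV B x) /
        (((symmDiffV A x).card : ℝ) * ((symmDiffV B x).card : ℝ)) ≤
      (1 + ε / ((A ∪ B).card : ℝ)) *
        (cutWeight w A B / ((A.card : ℝ) * (B.card : ℝ)))

/-- Cluster trees obtained by recursively splitting along `ε/n`-locally-densest cuts. -/
def IsRecLocallyDensestCutTree [DecidableEq V] (w : V → V → ℝ) (ε : ℝ) :
    ClusterTree V → Prop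
  | ClusterTree.leaf _ => True
  | ClusterTree.node L R =>
      IsLocallyDensestCut w ε L.leaves R.leaves ∧
      IsRecLocallyDensestCutTree w ε L ∧ IsRecLocallyDensestCutTree w ε R

/-- Cluster trees obtained by recursively splitting along `φ`-approximate sparsest cuts. -/
def IsRecApproxSparsestCutTree [DecidableEq V] (w : V → V → ℝ) (φ : ℝ) :
    ClusterTree V → Prop
  | ClusterTree.leaf _ => True
  | ClusterTree.node L R =>
      (∀ S : Finset V, S ⊆ L.leaves ∪ R.leaves → S.Nonempty → S ⊂ L.leaves ∪ R.leaves →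
        cutWeight w L.leaves R.leaves / ((L.leaves.card : ℝ) * (R.leaves.card : ℝ)) ≤
          φ * (cutWeight w S ((L.leaves ∪ R.leaves) \ S) /
            ((S.card : ℝ) * (((L.leaves ∪ R.leaves) \ S).card : ℝ)))) ∧
      IsRecApproxSparsestCutTree w φ L ∧ IsRecApproxSparsestCutTree w φ R

/-- Cluster trees obtained by recursively splitting along exact sparsest cuts. -/
def IsRecSparsestCutTree [DecidableEq V] (w : V → V → ℝ) : ClusterTree V → Prop
  | ClusterTree.leaf _ => True
  | ClusterTree.node L R =>
      (∀ S : Finset V, S ⊆ L.leaves ∪ R.leaves → S.Nonempty → S ⊂ L.leaves ∪ R.leaves →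
        cutWeight w L.leaves R.leaves / ((L.leaves.card : ℝ) * (R.leaves.card : ℝ)) ≤
          cutWeight w S ((L.leaves ∪ R.leaves) \ S) /
            ((S.card : ℝ) * (((L.leaves ∪ R.leaves) \ S).card : ℝ))) ∧
      IsRecSparsestCutTree w L ∧ IsRecSparsestCutTree w R

/-- Cluster trees obtained by recursively splitting along exact densest cuts. -/
def IsRecDensestCutTree [DecidableEq V] (w : V → V → ℝ) : ClusterTree V → Prop
  | ClusterTree.leaf _ => True
  | ClusterTree.node L R =>
      (∀ S : Finset V, S ⊆ L.leaves ∪ R.leaves → S.Nonempty → S ⊂ L.leaves ∪ R.leaves →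
        cutWeight w S ((L.leaves ∪ R.leaves) \ S) /
            ((S.card : ℝ) * (((L.leaves ∪ R.leaves) \ S).card : ℝ)) ≤
          cutWeight w L.leaves R.leaves / ((L.leaves.card : ℝ) * (R.leaves.card : ℝ))) ∧
      IsRecDensestCutTree w L ∧ IsRecDensestCutTree w R

/-- Cluster trees produced by the bisection 2-Center algorithm (similarity setting). -/
def IsBisection2CenterTree [DecidableEq V] (w : V → V → ℝ) : ClusterTree V → Prop
  | ClusterTree.leaf _ => True
  | ClusterTree.node L R =>
      (∃ u ∈ L.leaves ∪ R.leaves, ∃ v ∈ L.leaves ∪ R.leaves, u ≠ v ∧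
        (∃ r : ℝ,
          (∀ x ∈ L.leaves ∪ R.leaves, r ≤ max (w x u) (w x v)) ∧
          (∀ u' ∈ L.leaves ∪ R.leaves, ∀ v' ∈ L.leaves ∪ R.leaves, u' ≠ v' →
            ∃ x ∈ L.leaves ∪ R.leaves, max (w x u') (w x v') ≤ r)) ∧
        L.leaves = (L.leaves ∪ R.leaves).filter fun x => w x v ≤ w x u) ∧
      IsBisection2CenterTree w L ∧ IsBisection2CenterTree w R

/-- Cluster trees produced by the bisection 2-Center algorithm (dissimilarity setting). -/
def IsBisection2CenterTreeDissim [DecidableEq V] (w : V → V → ℝ) : ClusterTree V → Prop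
  | ClusterTree.leaf _ => True
  | ClusterTree.node L R =>
      (∃ u ∈ L.leaves ∪ R.leaves, ∃ v ∈ L.leaves ∪ R.leaves, u ≠ v ∧
        (∃ r : ℝ,
          (∀ x ∈ L.leaves ∪ R.leaves, min (w x u) (w x v) ≤ r) ∧
          (∀ u' ∈ L.leaves ∪ R.leaves, ∀ v' ∈ L.leaves ∪ R.leaves, u' ≠ v' →
            ∃ x ∈ L.leaves ∪ R.leaves, r ≤ min (w x u') (w x v'))) ∧
        L.leaves = (L.leaves ∪ R.leaves).filter fun x => w x u ≤ w x v) ∧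
      IsBisection2CenterTreeDissim w L ∧ IsBisection2CenterTreeDissim w R

end Cuts

/-! ### Pivot algorithms -/

mutual
/-- Trees produced by the fast pivot algorithm (Algorithm 6 of CKMM):
pick a pivot `p`, split the other vertices into classes of equal similarity to `p`
(in strictly decreasing order of similarity), recurse, and attach along a spine. -/
inductive IsPivotTree {V : Type} [DecidableEq V] (w : V → V → ℝ) : ClusterTree V → Prop where
  | mk : ∀ (p : V) (T : ClusterTree V), PivotSpine w p T → IsPivotTree w T

/-- The spine of the pivot algorithm: `PivotSpine w p T` says that `T` is an iterated
union of the single-vertex tree on `p` with pivot trees of the similarity classes of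
`p`, attached in strictly decreasing order of similarity to `p`. -/
inductive PivotSpine {V : Type} [DecidableEq V] (w : V → V → ℝ) : V → ClusterTree V → Prop where
  | base : ∀ p : V, PivotSpine w p (ClusterTree.leaf p)
  | step : ∀ (p : V) (S T : ClusterTree V) (c : ℝ),
      PivotSpine w p S → IsPivotTree w T →
      (∀ v ∈ T.leaves, w p v = c) →
      (∀ u ∈ S.leaves, u ≠ p → c < w p u) →
      PivotSpine w p (ClusterTree.node S T)
end

mutual
/-- Trees produced by the robust pivot algorithm (Algorithm 7 of CKMM). -/
inductive IsRobustPivotTree {V : Type} [DecidableEq V] (w : V → V → ℝ) :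
    ClusterTree V → Prop where
  | mk : ∀ (p : V) (T : ClusterTree V), RobustPivotSpine w T.leaves p T →
      IsRobustPivotTree w T

/-- `RobustPivotSpine w U p T` : `T` is a prefix (a spine) of a run of the robust pivot
algorithm on the vertex set `U`, started at the pivot `p`.  At each step, `wi` is the
maximum weight of an edge in the cut `(Ṽ, U \ Ṽ)` (where `Ṽ` is the set of already
clustered vertices), and the next block is the least subset of `U \ Ṽ` closed under
adding any vertex having an edge of weight at least `wi` into the block or into `Ṽ`. -/
inductive RobustPivotSpine {V : Type} [DecidableEq V] (w : V → V → ℝ) :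
    Finset V → V → ClusterTree V → Prop where
  | base : ∀ (U : Finset V) (p : V), RobustPivotSpine w U p (ClusterTree.leaf p)
  | step : ∀ (U : Finset V) (p : V) (S T : ClusterTree V) (wi : ℝ),
      RobustPivotSpine w U p S →
      IsRobustPivotTree w T →
      (∃ p1 ∈ S.leaves, ∃ p2 ∈ U \ S.leaves, w p1 p2 = wi) →
      (∀ q1 ∈ S.leaves, ∀ q2 ∈ U \ S.leaves, w q1 q2 ≤ wi) →
      T.leaves ⊆ U \ S.leaves →
      (∀ u ∈ U \ S.leaves, (∃ v ∈ T.leaves ∪ S.leaves, wi ≤ w u v) → u ∈ T.leaves) →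
      (∀ C : Finset V, C ⊆ U \ S.leaves →
        (∀ u ∈ U \ S.leaves, (∃ v ∈ C ∪ S.leaves, wi ≤ w u v) → u ∈ C) →
        T.leaves ⊆ C) →
      RobustPivotSpine w U p (ClusterTree.node S T)
end

/-! ### Paths and caterpillars -/

/-- Attach the leaves from the list `l` one by one on top of `t` (a "spine"). -/
def spineTree {V : Type} : ClusterTree V → List V → ClusterTree V
  | t, [] => t
  | t, v :: vs => spineTree (ClusterTree.node t (ClusterTree.leaf v)) vs

/-- The unit-weight path on `n` vertices. -/
def pathW (n : ℕ) (i j : Fin n) : ℝ :=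
  if (i : ℕ) + 1 = (j : ℕ) ∨ (j : ℕ) + 1 = (i : ℕ) then 1 else 0

/-! ### Random graphs: hierarchical stochastic block model -/

/-- Index set for the potential edges of a graph on `Fin n`. -/
abbrev EdgeIdx (n : ℕ) := {p : Fin n × Fin n // p.1 < p.2}

/-- The (0/1) weight function of the random graph described by the edge
configuration `c`. -/
def configW {n : ℕ} (c : EdgeIdx n → Bool) (u v : Fin n) : ℝ :=
  if h : u < v then (if c ⟨(u, v), h⟩ then 1 else 0)
  else if h' : v < u then (if c ⟨(v, u), h'⟩ then 1 else 0)
  else 0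

/-- The probability of the edge configuration `c` when each edge `e` is present
independently with probability `q e`. -/
def configProb {n : ℕ} (q : Fin n → Fin n → ℝ) (c : EdgeIdx n → Bool) : ℝ :=
  ∏ e : EdgeIdx n, if c e then q e.val.1 e.val.2 else 1 - q e.val.1 e.val.2

/-- The expected cost `E[Γ(T) | ψ]` of a fixed cluster tree `T`, over the random
choice of the edges (with edge probabilities `q`). -/
def expectedCost {n : ℕ} (g : ℕ → ℕ → ℝ) (q : Fin n → Fin n → ℝ)
    (T : ClusterTree (Fin n)) : ℝ :=
  ∑ c : EdgeIdx n → Bool, configProb q c * treeCost (configW c) g T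

/-- The (fixed, size-independent) data of a hierarchical stochastic block model with
`k` bottom-level clusters: a generating tree `Ttil` with weights `Wtil` in `(0,1)`
(the graph `G̃ₖ` on `k` vertices generated from an ultrametric), and intra-cluster
probabilities `p i ∈ (0,1]` exceeding the weight of the parent of leaf `i`. -/
structure HSBM (k : ℕ) where
  Ttil : ClusterTree (Fin k)
  Wtil : ClusterTree (Fin k) → ℝ
  p : Fin k → ℝ
  ttil_isClusterTree : IsClusterTree Ttil
  wtil_pos : ∀ L R, IsSubtreeOf (ClusterTree.node L R) Ttil →
    0 < Wtil (ClusterTree.node L R)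
  wtil_lt_one : ∀ L R, IsSubtreeOf (ClusterTree.node L R) Ttil →
    Wtil (ClusterTree.node L R) < 1
  wtil_mono : ∀ L R, IsSubtreeOf (ClusterTree.node L R) Ttil →
    ∀ s, IsSubtreeOf s L ∨ IsSubtreeOf s R → Wtil (ClusterTree.node L R) ≤ Wtil s
  p_pos : ∀ i, 0 < p i
  p_le_one : ∀ i, p i ≤ 1
  p_gt_parent : ∀ L R, IsSubtreeOf (ClusterTree.node L R) Ttil →
    ∀ i : Fin k, L = ClusterTree.leaf i ∨ R = ClusterTree.leaf i →
      Wtil (ClusterTree.node L R) < p i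

/-- The edge probabilities of the HSBM `M` with sparsity `α`, given the assignment
`ψ` of vertices to bottom-level clusters.  These are also the edge weights of the
expected graph `Ḡ`. -/
def HSBM.edgeProb {k : ℕ} (M : HSBM k) (α : ℝ) {n : ℕ} (ψ : Fin n → Fin k) :
    Fin n → Fin n → ℝ := fun u v =>
  if ψ u = ψ v then α * M.p (ψ u)
  else α * M.Wtil (lcaSubtree M.Ttil (ψ u) (ψ v))

/-- The probability of the sample `ω = (ψ, c)` (labels and edges) of the HSBM `M`
with label proportions `f` and sparsity `α`. -/
def hsbmProb {k : ℕ} (M : HSBM k) (f : Fin k → ℝ) (α : ℝ) {n : ℕ}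
    (ω : (Fin n → Fin k) × (EdgeIdx n → Bool)) : ℝ :=
  (∏ v : Fin n, f (ω.1 v)) * configProb (M.edgeProb α ω.1) ω.2

/-- The common cost `κ(n)` of all cluster trees of the unit-weight clique on `n`
vertices (computed on the caterpillar tree). -/
def cliqueTreeCost (g : ℕ → ℕ → ℝ) (n : ℕ) : ℝ :=
  ∑ i ∈ Finset.range n, (i : ℝ) * g i 1

/-- The smoothness property: `max {g(n₁,n₂) : n₁+n₂ = n} = O(κ(n)/n²)`. -/
def SmoothCost (g : ℕ → ℕ → ℝ) : Prop :=
  ∃ C : ℝ, 0 < C ∧ ∀ n1 n2 : ℕ, 1 ≤ n1 → 1 ≤ n2 →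
    g n1 n2 * (((n1 + n2 : ℕ) : ℝ)) ^ 2 ≤ C * cliqueTreeCost g (n1 + n2)

end

/-! ### Auxiliary development for Statement 17 -/

/-- Path weight on `ℕ`. -/
noncomputable def wN : ℕ → ℕ → ℝ := fun i j => if i + 1 = j ∨ j + 1 = i then 1 else 0

lemma wN_nonneg (i j : ℕ) : 0 ≤ wN i j := by unfold wN; split <;> norm_num

/-- Balanced bisection tree on the interval `[a, a+len)`. -/
def balTreeN : ℕ → ℕ → ClusterTree ℕ
  | a, 0 => ClusterTree.leaf a
  | a, 1 => ClusterTree.leaf a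
  | a, (m+2) =>
      ClusterTree.node (balTreeN a ((m+2)/2)) (balTreeN (a + (m+2)/2) ((m+2) - (m+2)/2))
  termination_by _ len => len
  decreasing_by all_goals omega

lemma leavesList_balTreeN : ∀ (len a : ℕ), 0 < len →
    (balTreeN a len).leavesList = List.range' a len := by
  intro len
  induction len using Nat.strong_induction_on with
  | _ len ih =>
    match len with
    | 0 => intro a h; omega
    | 1 => intro a _; simp [balTreeN, ClusterTree.leavesList]
    | (m+2) =>
      intro a _
      have hk : 0 < (m+2)/2 := by omega
      have hr : 0 < (m+2) - (m+2)/2 := by omega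
      have e1 := ih ((m+2)/2) (by omega) a hk
      have e2 := ih ((m+2) - (m+2)/2) (by omega) (a + (m+2)/2) hr
      show (balTreeN a (m+2)).leavesList = _
      rw [balTreeN]
      show (balTreeN a ((m+2)/2)).leavesList ++ _ = _
      rw [e1, e2]
      have := List.range'_append (s := a) (m := (m+2)/2) (n := (m+2) - (m+2)/2) (step := 1)
      simp only [one_mul, mul_one] at this
      rw [this]
      congr 1
      omega

lemma leaves_balTreeN (len a : ℕ) (h : 0 < len) :
    (balTreeN a len).leaves = (List.range' a len).toFinset := by
  unfold ClusterTree.leaves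
  rw [leavesList_balTreeN len a h]

lemma mem_leaves_balTreeN {len a i : ℕ} (h : 0 < len) :
    i ∈ (balTreeN a len).leaves ↔ a ≤ i ∧ i < a + len := by
  rw [leaves_balTreeN len a h, List.mem_toFinset, List.mem_range']
  constructor
  · rintro ⟨j, hj, rfl⟩; omega
  · intro hi; exact ⟨i - a, by omega, by omega⟩

lemma card_leaves_balTreeN (len a : ℕ) (h : 0 < len) :
    (balTreeN a len).leaves.card = len := by
  rw [leaves_balTreeN len a h]
  rw [List.toFinset_card_of_nodup (List.nodup_range')]
  exact List.length_range'

lemma cutWeight_nonneg (A B : Finset ℕ) : 0 ≤ cutWeight wN A B := by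
  unfold cutWeight
  exact Finset.sum_nonneg fun a _ => Finset.sum_nonneg fun b _ => wN_nonneg a b

lemma cut_le_one (A B : Finset ℕ) (c : ℕ) (hA : ∀ i ∈ A, i < c) (hB : ∀ j ∈ B, c ≤ j) :
    cutWeight wN A B ≤ 1 := by
  unfold cutWeight
  calc ∑ a ∈ A, ∑ b ∈ B, wN a b
      ≤ ∑ a ∈ A, (if a = c - 1 then (1:ℝ) else 0) := by
        apply Finset.sum_le_sum
        intro i hi
        calc ∑ b ∈ B, wN i b
            ≤ ∑ b ∈ B, (if i + 1 = b then (1:ℝ) else 0) := by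
              apply Finset.sum_le_sum
              intro j hj
              unfold wN
              have h1 := hA i hi
              have h2 := hB j hj
              split_ifs with hc hc' hc'
              · exact le_rfl
              · exfalso; omega
              · norm_num
              · exact le_rfl
        _ = (if i + 1 ∈ B then (1:ℝ) else 0) := by
              rw [Finset.sum_ite_eq B (i+1) (fun _ => (1:ℝ))]
        _ ≤ (if i = c - 1 then (1:ℝ) else 0) := by
              split_ifs with h1 h2 h2
              · exact le_rfl
              · exfalso
                have := hB _ h1
                have := hA i hi
                omega
              · norm_num
              · exact le_rfl
    _ = (if c - 1 ∈ A then (1:ℝ) else 0) := by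
          rw [Finset.sum_ite_eq' A (c-1) (fun _ => (1:ℝ))]
    _ ≤ 1 := by split_ifs <;> norm_num

lemma cost_balTreeN : ∀ (len a : ℕ),
    dasguptaCost wN (balTreeN a len) ≤ (len : ℝ) * (Nat.clog 2 len : ℝ) := by
  intro len
  induction len using Nat.strong_induction_on with
  | _ len ih =>
    match len with
    | 0 => intro a; simp [balTreeN, dasguptaCost]
    | 1 => intro a; simp [balTreeN, dasguptaCost]
    | (m+2) =>
      intro a
      set n := m + 2 with hn
      set k := n / 2 with hk
      set r := n - n / 2 with hr
      have hk1 : 0 < k := by omega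
      have hr1 : 0 < r := by omega
      have hkr : k + r = n := by omega
      -- clog recurrence
      have hclog : Nat.clog 2 n = Nat.clog 2 ((n + 1) / 2) + 1 := by
        have h := Nat.clog_of_two_le (show 1 < 2 by norm_num) (show 2 ≤ n by omega)
        have harg : (n + 2 - 1) / 2 = (n + 1) / 2 := by omega
        rw [harg] at h
        exact h
      have hrval : r = (n + 1) / 2 := by omega
      have hclogr : Nat.clog 2 r + 1 ≤ Nat.clog 2 n := by
        rw [hclog, hrval]
      have hclogk : Nat.clog 2 k + 1 ≤ Nat.clog 2 n := by
        rw [hclog]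
        have : Nat.clog 2 k ≤ Nat.clog 2 ((n+1)/2) :=
          Nat.clog_mono_right 2 (by omega)
        omega
      -- cost of the node
      have hL := ih k (by omega) a
      have hR := ih r (by omega) (a + k)
      have hcardL := card_leaves_balTreeN k a hk1
      have hcardR := card_leaves_balTreeN r (a + k) hr1
      have hcut : cutWeight wN (balTreeN a k).leaves (balTreeN (a+k) r).leaves ≤ 1 := by
        apply cut_le_one _ _ (a + k)
        · intro i hi; exact ((mem_leaves_balTreeN hk1).1 hi).2
        · intro j hj; exact ((mem_leaves_balTreeN hr1).1 hj).1
      have hcut0 := cutWeight_nonneg (balTreeN a k).leaves (balTreeN (a+k) r).leaves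
      have hcost : dasguptaCost wN (balTreeN a n) =
          (((balTreeN a k).leaves.card + (balTreeN (a+k) r).leaves.card : ℕ) : ℝ) *
            cutWeight wN (balTreeN a k).leaves (balTreeN (a+k) r).leaves
          + dasguptaCost wN (balTreeN a k) + dasguptaCost wN (balTreeN (a+k) r) := by
        rw [show balTreeN a n =
          ClusterTree.node (balTreeN a k) (balTreeN (a+k) r) from by rw [hn, balTreeN]]
        rw [dasguptaCost]
      rw [hcost, hcardL, hcardR, hkr]
      have hck : ((Nat.clog 2 k : ℕ) : ℝ) ≤ (Nat.clog 2 n : ℝ) - 1 := by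
        have h := (Nat.cast_le (α := ℝ)).2 hclogk
        push_cast at h
        linarith
      have hcr : ((Nat.clog 2 r : ℕ) : ℝ) ≤ (Nat.clog 2 n : ℝ) - 1 := by
        have h := (Nat.cast_le (α := ℝ)).2 hclogr
        push_cast at h
        linarith
      have hkR : (0:ℝ) ≤ (k:ℝ) := by positivity
      have hrR : (0:ℝ) ≤ (r:ℝ) := by positivity
      have hL' : dasguptaCost wN (balTreeN a k) ≤ (k:ℝ) * ((Nat.clog 2 n : ℝ) - 1) :=
        le_trans hL (by nlinarith [Nat.cast_nonneg (α := ℝ) (Nat.clog 2 k)])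
      have hR' : dasguptaCost wN (balTreeN (a+k) r) ≤ (r:ℝ) * ((Nat.clog 2 n : ℝ) - 1) :=
        le_trans hR (by nlinarith [Nat.cast_nonneg (α := ℝ) (Nat.clog 2 r)])
      have hnR : (0:ℝ) ≤ (n:ℝ) := by positivity
      have hsum : (k:ℝ) + (r:ℝ) = (n:ℝ) := by exact_mod_cast congrArg (Nat.cast (R := ℝ)) hkr
      nlinarith [hL', hR', hcut, hcut0, hsum]

/-- Map on cluster trees. -/
def mapT {V W : Type} (f : V → W) : ClusterTree V → ClusterTree W
  | ClusterTree.leaf v => ClusterTree.leaf (f v)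
  | ClusterTree.node L R => ClusterTree.node (mapT f L) (mapT f R)

lemma leavesList_mapT {V W : Type} (f : V → W) (T : ClusterTree V) :
    (mapT f T).leavesList = T.leavesList.map f := by
  induction T with
  | leaf v => simp [mapT, ClusterTree.leavesList]
  | node L R ihL ihR => simp [mapT, ClusterTree.leavesList, ihL, ihR]

lemma leaves_mapT {V W : Type} [DecidableEq V] [DecidableEq W] (f : V → W)
    (T : ClusterTree V) : (mapT f T).leaves = T.leaves.image f := by
  unfold ClusterTree.leaves
  rw [leavesList_mapT]
  ext a
  simp

lemma cost_mapT {n : ℕ} (f : ℕ → Fin n) (hf : ∀ i, i < n → ((f i : Fin n) : ℕ) = i)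
    (T : ClusterTree ℕ) (hT : ∀ i ∈ T.leavesList, i < n) :
    dasguptaCost (pathW n) (mapT f T) = dasguptaCost wN T := by
  have hinj : ∀ x, x < n → ∀ y, y < n → f x = f y → x = y := by
    intro x hx y hy hxy
    have h2 := congrArg Fin.val hxy
    rwa [hf x hx, hf y hy] at h2
  induction T with
  | leaf v => simp [mapT, dasguptaCost]
  | node L R ihL ihR =>
    have hTL : ∀ i ∈ L.leavesList, i < n := by
      intro i hi; exact hT i (by simp [ClusterTree.leavesList, hi])
    have hTR : ∀ i ∈ R.leavesList, i < n := by
      intro i hi; exact hT i (by simp [ClusterTree.leavesList, hi])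
    have hLmem : ∀ i ∈ L.leaves, i < n := fun i hi => hTL i (List.mem_toFinset.1 hi)
    have hRmem : ∀ i ∈ R.leaves, i < n := fun i hi => hTR i (List.mem_toFinset.1 hi)
    have hinjL : ∀ x ∈ L.leaves, ∀ y ∈ L.leaves, f x = f y → x = y := fun x hx y hy h =>
      hinj x (hLmem x hx) y (hLmem y hy) h
    have hinjR : ∀ x ∈ R.leaves, ∀ y ∈ R.leaves, f x = f y → x = y := fun x hx y hy h =>
      hinj x (hRmem x hx) y (hRmem y hy) h
    have hcardL : (mapT f L).leaves.card = L.leaves.card := by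
      rw [leaves_mapT]; exact Finset.card_image_of_injOn hinjL
    have hcardR : (mapT f R).leaves.card = R.leaves.card := by
      rw [leaves_mapT]; exact Finset.card_image_of_injOn hinjR
    have hcut : cutWeight (pathW n) (mapT f L).leaves (mapT f R).leaves =
        cutWeight wN L.leaves R.leaves := by
      rw [leaves_mapT, leaves_mapT]
      unfold cutWeight
      rw [Finset.sum_image hinjL]
      apply Finset.sum_congr rfl
      intro i hi
      rw [Finset.sum_image hinjR]
      apply Finset.sum_congr rfl
      intro j hj
      unfold pathW wN
      rw [hf i (hLmem i hi), hf j (hRmem j hj)]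
    show _ * _ + _ + _ = _ * _ + _ + _
    rw [hcardL, hcardR, hcut, ihL hTL, ihR hTR]

/-- Claim 4, CKMM: for the unit-weight path on `n > 2` vertices,
`OPT = O(n log n)` under Dasgupta's cost. -/
theorem statement17 :
    ∃ C : ℝ, 0 < C ∧ ∀ n : ℕ, 2 < n →
      ∃ T : ClusterTree (Fin n), IsClusterTree T ∧
        dasguptaCost (pathW n) T ≤ C * n * Real.log n := by
  refine ⟨4, by norm_num, ?_⟩
  intro n hn
  have hn0 : 0 < n := by omega
  set f : ℕ → Fin n := fun i => ⟨min i (n - 1), by omega⟩ with hfdef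
  have hf : ∀ i, i < n → ((f i : Fin n) : ℕ) = i := by
    intro i hi; simp only [hfdef]; omega
  set T : ClusterTree (Fin n) := mapT f (balTreeN 0 n) with hTdef
  have hll : (balTreeN 0 n).leavesList = List.range' 0 n :=
    leavesList_balTreeN n 0 hn0
  have hmem : ∀ i ∈ (balTreeN 0 n).leavesList, i < n := by
    intro i hi
    rw [hll] at hi
    rw [List.mem_range'] at hi
    obtain ⟨j, hj, rfl⟩ := hi
    omega
  refine ⟨T, ⟨?_, ?_⟩, ?_⟩
  · -- Nodup
    rw [hTdef, leavesList_mapT, hll]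
    refine List.Nodup.map_on ?_ (List.nodup_range')
    intro x hx y hy hxy
    have hx' : x < n := hmem x (by rw [hll]; exact hx)
    have hy' : y < n := hmem y (by rw [hll]; exact hy)
    have h2 := congrArg Fin.val hxy
    rwa [hf x hx', hf y hy'] at h2
  · -- leaves = univ
    apply Finset.eq_univ_of_card
    have hnodup : (T.leavesList).Nodup := by
      rw [hTdef, leavesList_mapT, hll]
      refine List.Nodup.map_on ?_ (List.nodup_range')
      intro x hx y hy hxy
      have hx' : x < n := hmem x (by rw [hll]; exact hx)
      have hy' : y < n := hmem y (by rw [hll]; exact hy)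
      have h2 := congrArg Fin.val hxy
      rwa [hf x hx', hf y hy'] at h2
    rw [ClusterTree.leaves, List.toFinset_card_of_nodup hnodup]
    rw [hTdef, leavesList_mapT, List.length_map, hll, List.length_range']
    simp
  · -- cost bound
    have h1 : dasguptaCost (pathW n) T = dasguptaCost wN (balTreeN 0 n) :=
      cost_mapT f hf _ hmem
    have h2 := cost_balTreeN n 0
    -- clog bound
    have hclog1 : 0 < Nat.clog 2 n := Nat.clog_pos (by norm_num) (by omega)
    have hpow : 2 ^ (Nat.clog 2 n - 1) < n :=
      Nat.pow_pred_clog_lt_self (by norm_num) (by omega)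
    have hpowR : (2:ℝ) ^ (Nat.clog 2 n - 1) < (n:ℝ) := by exact_mod_cast hpow
    have hlogle : ((Nat.clog 2 n - 1 : ℕ) : ℝ) * Real.log 2 ≤ Real.log n := by
      have := Real.log_le_log (by positivity) hpowR.le
      rwa [Real.log_pow] at this
    have hlog2 : (0.6931471803 : ℝ) < Real.log 2 := Real.log_two_gt_d9
    have hlogn : Real.log 2 ≤ Real.log n := by
      apply Real.log_le_log (by norm_num)
      exact_mod_cast by omega
    have hcast : ((Nat.clog 2 n : ℕ) : ℝ) = ((Nat.clog 2 n - 1 : ℕ) : ℝ) + 1 := by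
      have : Nat.clog 2 n = (Nat.clog 2 n - 1) + 1 := by omega
      rw [this]; push_cast; ring
    have hcnn : (0:ℝ) ≤ ((Nat.clog 2 n - 1 : ℕ) : ℝ) := Nat.cast_nonneg _
    have hclogR : ((Nat.clog 2 n : ℕ) : ℝ) ≤ 4 * Real.log n := by
      rw [hcast]
      nlinarith [hlogle, hlog2, hlogn, hcnn]
    have hnR : (0:ℝ) ≤ (n:ℝ) := Nat.cast_nonneg n
    calc dasguptaCost (pathW n) T = dasguptaCost wN (balTreeN 0 n) := h1
      _ ≤ (n:ℝ) * (Nat.clog 2 n : ℝ) := h2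
      _ ≤ (n:ℝ) * (4 * Real.log n) := by
          apply mul_le_mul_of_nonneg_left hclogR hnR
      _ = 4 * n * Real.log n := by ring
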